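/- arXiv:1803.06887 — 2 statements merged into one kernel-verified Lean document; each statement's English description precedes it below -/
import Mathlib

section
/- If a random vector x ∈ ℝ^m is both s-rectifiable and t-rectifiable (s, t ∈ ℕ), then s = t. -/
open MeasureTheory

/-- A set `U ⊆ ℝ^m` is `s`-rectifiable if it is the image of a compact set `A ⊆ ℝ^s`
under a Lipschitz mapping. -/
def IsRectifiableSet (s : ℕ) {m : ℕ} (U : Set (EuclideanSpace ℝ (Fin m))) : Prop :=
  ∃ (A : Set (EuclideanSpace ℝ (Fin s)))
    (φ : EuclideanSpace ℝ (Fin s) → EuclideanSpace ℝ (Fin m)) (L : NNReal),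
    IsCompact A ∧ LipschitzOnWith L φ A ∧ U = φ '' A

/-- A set is countably `s`-rectifiable if it is a countable union of `s`-rectifiable sets. -/
def IsCountablyRectifiable (s : ℕ) {m : ℕ} (U : Set (EuclideanSpace ℝ (Fin m))) : Prop :=
  ∃ V : ℕ → Set (EuclideanSpace ℝ (Fin m)),
    (∀ i, IsRectifiableSet s (V i)) ∧ U = ⋃ i, V i

/-- A set is countably `(H^s, s)`-rectifiable if it is `H^s`-(null-)measurable and
coincides with a countably `s`-rectifiable set up to an `H^s`-null set. -/
def IsCountablyHRectifiable (s : ℕ) {m : ℕ} (U : Set (EuclideanSpace ℝ (Fin m))) : Prop :=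
  NullMeasurableSet U (μH[(s : ℝ)]) ∧
  ∃ V : Set (EuclideanSpace ℝ (Fin m)), IsCountablyRectifiable s V ∧ μH[(s : ℝ)] (U \ V) = 0

/-- A random vector `x ∈ ℝ^m` (with distribution `μ`) is `s`-rectifiable if
`μ ≪ H^s|_U` for some countably `(H^s,s)`-rectifiable set `U`. -/
def IsRectifiableRV (s : ℕ) {m : ℕ} (μ : Measure (EuclideanSpace ℝ (Fin m))) : Prop :=
  ∃ U : Set (EuclideanSpace ℝ (Fin m)),
    IsCountablyHRectifiable s U ∧ μ ≪ (μH[(s : ℝ)]).restrict U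

/-!
A Lipschitz image of a subset of `ℝ^s` has Hausdorff dimension at most `s`, and Hausdorff
dimension is countably stable and ignores `H^s`-null sets, so an `s`-rectifiable random vector
is concentrated on a set of dimension at most `s`. If it were also `t`-rectifiable with `t > s`,
its law would be absolutely continuous with respect to `H^t`, which vanishes on such a set;
hence the law would be zero, which is impossible for a probability measure.
-/

variable {s m : ℕ} {U : Set (EuclideanSpace ℝ (Fin m))}

theorem IsRectifiableSet.dimH_le (hU : IsRectifiableSet s U) : dimH U ≤ s := by
  obtain ⟨A, φ, L, -, hφ, rfl⟩ := hU
  calc dimH (φ '' A) ≤ dimH A := hφ.dimH_image_le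
    _ ≤ dimH (Set.univ : Set (EuclideanSpace ℝ (Fin s))) := dimH_mono (Set.subset_univ A)
    _ = s := by rw [Real.dimH_univ_eq_finrank, finrank_euclideanSpace_fin]

theorem IsCountablyRectifiable.dimH_le (hU : IsCountablyRectifiable s U) : dimH U ≤ s := by
  obtain ⟨V, hV, rfl⟩ := hU
  rw [dimH_iUnion]
  exact iSup_le fun i => (hV i).dimH_le

theorem IsCountablyHRectifiable.dimH_le (hU : IsCountablyHRectifiable s U) : dimH U ≤ s := by
  obtain ⟨-, V, hV, hUV⟩ := hU
  have hdiff : dimH (U \ V) ≤ s := by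
    simpa using dimH_le_of_hausdorffMeasure_ne_top (d := s) (by simp [hUV])
  calc dimH U ≤ dimH (U \ V ∪ V) := dimH_mono (Set.subset_sdiff_union U V)
    _ = max (dimH (U \ V)) (dimH V) := dimH_union _ _
    _ ≤ s := max_le hdiff hV.dimH_le

namespace IsRectifiableRV

variable {μ : Measure (EuclideanSpace ℝ (Fin m))}

theorem absolutelyContinuous_hausdorffMeasure (hμ : IsRectifiableRV s μ) : μ ≪ μH[(s : ℝ)] := by
  obtain ⟨U, -, hac⟩ := hμ
  exact hac.trans (Measure.absolutelyContinuous_of_le Measure.restrict_le_self)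

theorem exists_dimH_le_ae_mem (hμ : IsRectifiableRV s μ) :
    ∃ U : Set (EuclideanSpace ℝ (Fin m)), dimH U ≤ s ∧ ∀ᵐ x ∂μ, x ∈ U := by
  obtain ⟨U, hU, hac⟩ := hμ
  exact ⟨U, hU.dimH_le, hac.ae_le (ae_restrict_mem₀ hU.1)⟩

theorem eq_zero_of_lt {t : ℕ} (hst : s < t) (hs : IsRectifiableRV s μ)
    (ht : IsRectifiableRV t μ) : μ = 0 := by
  obtain ⟨U, hdim, hae⟩ := hs.exists_dimH_le_ae_mem
  have hU : μ U = 0 :=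
    measure_zero_of_dimH_lt (d := t) (by simpa using ht.absolutelyContinuous_hausdorffMeasure)
      (hdim.trans_lt (by exact_mod_cast hst))
  rw [← Measure.restrict_eq_self_of_ae_mem hae, Measure.restrict_eq_zero.mpr hU]

end IsRectifiableRV

/-- The rectifiability parameter of a random vector is unique: if `x` is both
`s`-rectifiable and `t`-rectifiable, then `s = t`. -/
theorem rectifiability_parameter_unique {s t m : ℕ}
    (μ : Measure (EuclideanSpace ℝ (Fin m))) [IsProbabilityMeasure μ]
    (hs : IsRectifiableRV s μ) (ht : IsRectifiableRV t μ) : s = t := by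
  by_contra hne
  rcases lt_or_gt_of_ne hne with hst | hts
  · exact IsProbabilityMeasure.ne_zero μ (hs.eq_zero_of_lt hst ht)
  · exact IsProbabilityMeasure.ne_zero μ (ht.eq_zero_of_lt hts hs)
end

section
/- Suppose A ∈ ℝ^{n×m} is a matrix and g : ℝ^{n×m} × ℝ^n → ℝ^m is a Borel measurable mapping such that P[g(A, A x) ≠ x] < 1 for a random vector x ∈ ℝ^m. Then there exists a Borel set U ⊆ ℝ^m with P[x ∈ U] > 0 such that the linear map A is one-to-one on U. -/
open MeasureTheory

/- Decoding succeeds on the complement of a measurable hull of the failure set, which is a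
measurable set of positive measure on which the decoder is a left inverse of the encoder. -/

theorem exists_measurableSet_subset_compl_pos {α : Type*} [MeasurableSpace α] {μ : Measure α}
    {s : Set α} (hs : μ s < μ Set.univ) :
    ∃ t, MeasurableSet t ∧ t ⊆ sᶜ ∧ 0 < μ t := by
  refine ⟨(toMeasurable μ s)ᶜ, (measurableSet_toMeasurable μ s).compl,
    Set.compl_subset_compl.mpr (subset_toMeasurable μ s), pos_iff_ne_zero.mpr fun h0 => ?_⟩
  have := measure_univ_le_add_compl (μ := μ) (toMeasurable μ s)
  rw [h0, add_zero, measure_toMeasurable] at this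
  exact hs.not_ge this

theorem exists_measurableSet_injOn_of_decoder {α β : Type*} [MeasurableSpace α] {μ : Measure α}
    (f : α → β) (d : β → α) (h : μ {x | d (f x) ≠ x} < μ Set.univ) :
    ∃ U, MeasurableSet U ∧ 0 < μ U ∧ Set.InjOn f U := by
  obtain ⟨U, hU, hUs, hμU⟩ := exists_measurableSet_subset_compl_pos h
  have hinv : Set.LeftInvOn d f U := fun x hx => not_not.mp (hUs hx)
  exact ⟨U, hU, hμU, hinv.injOn⟩

theorem exists_injOn_of_decoder_general {m n : ℕ} (A : Fin n → Fin m → ℝ)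
    (g : (Fin n → Fin m → ℝ) × (Fin n → ℝ) → (Fin m → ℝ))
    (μ : Measure (Fin m → ℝ)) [IsProbabilityMeasure μ]
    (h : μ {v : Fin m → ℝ | g (A, fun i => ∑ j, A i j * v j) ≠ v} < 1) :
    ∃ U : Set (Fin m → ℝ), MeasurableSet U ∧ 0 < μ U ∧
      Set.InjOn (fun v : Fin m → ℝ => (fun i => ∑ j, A i j * v j : Fin n → ℝ)) U :=
  exists_measurableSet_injOn_of_decoder _ (fun y => g (A, y)) (by rwa [measure_univ])

/-- If a Borel measurable decoder `g` recovers the random vector `x` from `(A, A x)`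
with error probability smaller than one, then there exists a Borel set `U` of positive
probability on which the linear map induced by `A` is one-to-one. -/
theorem exists_injOn_of_decoder {m n : ℕ} (A : Fin n → Fin m → ℝ)
    (g : (Fin n → Fin m → ℝ) × (Fin n → ℝ) → (Fin m → ℝ)) (hg : Measurable g)
    (μ : Measure (Fin m → ℝ)) [IsProbabilityMeasure μ]
    (h : μ {v : Fin m → ℝ | g (A, fun i => ∑ j, A i j * v j) ≠ v} < 1) :
    ∃ U : Set (Fin m → ℝ), MeasurableSet U ∧ 0 < μ U ∧
      Set.InjOn (fun v : Fin m → ℝ => (fun i => ∑ j, A i j * v j : Fin n → ℝ)) U :=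
  exists_injOn_of_decoder_general A g μ h
end
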